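/- arXiv:1905.06117 — 2 statements merged into one kernel-verified Lean document; each statement's English description precedes it below -/
import Mathlib

section
/- Wronskian criterion for linear dependence: let k ≥ 1 and h₁, …, h_k be formal power series over ℂ. The Wronskian W(h₁,…,h_k), the determinant of the k×k matrix whose (i,j) entry is the (i−1)-st formal derivative of h_j, is the zero power series if and only if h₁, …, h_k are linearly dependent over ℂ. -/
/-!
If `∑ cⱼ hⱼ = 0` with `c ≠ 0`, the constant vector `c` lies in the kernel of the Wronskian
matrix. Conversely, replacing `h` by `A h` multiplies the Wronskian by `det A`, and a
`k`-dimensional space `V` of power series contains elements `g₁, …, g_k` of pairwise distinct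
orders `d₁, …, d_k`, because the coefficients at the orders occurring in `V` separate the points
of `V`. The operator `X^i ∂^i` multiplies `X^n` by the falling factorial `n(n-1)⋯(n-i+1)`, so
`X^{dⱼ}` divides the `j`-th column of `(X^i ∂^i gⱼ)`, a matrix whose determinant is
`X^{∑ i} W(g)`. Its coefficient of `X^{∑ dⱼ}` is `∏ⱼ coeff dⱼ gⱼ` times the determinant of the
falling factorials `dⱼ(dⱼ-1)⋯(dⱼ-i+1)`, a Vandermonde determinant in the distinct `dⱼ`. Hence
`W(g) ≠ 0`, and so `W(h) ≠ 0`.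
-/

open PowerSeries

/-- The Wronskian of `k` formal power series: the determinant of the `k × k` 
matrix whose `(i,j)` entry is the `i`-th formal derivative of `h j`. -/
noncomputable def psWronskian {k : ℕ} (h : Fin k → PowerSeries ℂ) : PowerSeries ℂ :=
  Matrix.det (Matrix.of fun i j : Fin k => (⇑(PowerSeries.derivative ℂ))^[(i : ℕ)] (h j))

open Finset Matrix Function Module

theorem Matrix.det_descFactorial_ne_zero {R : Type*} [CommRing R] [IsDomain R] [CharZero R]
    {k : ℕ} {d : Fin k → ℕ} (hd : Injective d) :
    (of fun i j : Fin k => ((d j).descFactorial i : R)).det ≠ 0 := by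
  have hT : (of fun i j : Fin k => ((d j).descFactorial i : R))
      = (of fun i j : Fin k => (descPochhammer R j).eval (d i : R))ᵀ := by
    ext i j
    simp [descPochhammer_eval_eq_descFactorial]
  rw [hT, det_transpose, ← det_eval_matrixOfPolynomials_eq_det_vandermonde _ _
    (fun j => descPochhammer_natDegree _ _) (fun j => monic_descPochhammer _ _),
    det_vandermonde_ne_zero_iff]
  exact Nat.cast_injective.comp hd

namespace PowerSeries

section Derivative

variable {R : Type*} [CommSemiring R]

theorem coeff_X_pow_mul_iterate_derivative (f : R⟦X⟧) (i n : ℕ) :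
    coeff n (X ^ i * (d⁄dX R)^[i] f) = n.descFactorial i * coeff n f := by
  rw [coeff_X_pow_mul']
  split_ifs with hin
  · obtain ⟨m, rfl⟩ := Nat.exists_eq_add_of_le' hin
    rw [Nat.add_sub_cancel, coeff_iterate_derivative, Nat.add_descFactorial_eq_ascFactorial]
  · rw [Nat.descFactorial_of_lt (not_le.mp hin), Nat.cast_zero, zero_mul]

theorem iterate_derivative_sum_smul {ι : Type*} (s : Finset ι) (c : ι → R) (f : ι → R⟦X⟧)
    (i : ℕ) : (d⁄dX R)^[i] (∑ l ∈ s, c l • f l) = ∑ l ∈ s, c l • (d⁄dX R)^[i] (f l) := by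
  have hpow : ∀ g, (d⁄dX R)^[i] g = ((d⁄dX R : Module.End R R⟦X⟧) ^ i) g := fun g => by
    rw [Module.End.pow_apply]; rfl
  simp only [hpow, map_sum, map_smul]

end Derivative

theorem coeff_sum_det_of_X_pow_dvd {R n : Type*} [CommRing R] [Fintype n] [DecidableEq n]
    (M : Matrix n n R⟦X⟧) (d : n → ℕ) (hM : ∀ i j, X ^ d j ∣ M i j) :
    coeff (∑ j, d j) M.det = (of fun i j => coeff (d j) (M i j)).det := by
  choose U hU using hM
  have hcoeff :
      (of fun i j => coeff (d j) (M i j)) = (constantCoeff (R := R)).mapMatrix (of U) := by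
    ext i j
    simpa [hU] using coeff_X_pow_mul (U i j) (d j) 0
  rw [hcoeff, ← RingHom.map_det, show M = of fun i j => X ^ d j * of U i j from Matrix.ext hU,
    det_mul_row, prod_pow_eq_pow_sum]
  simpa using coeff_X_pow_mul (of U).det (∑ j, d j) 0

section Order

variable {K : Type*} [Field K]

theorem finrank_le_encard_orders (V : Submodule K K⟦X⟧) [FiniteDimensional K V] :
    (finrank K V : ℕ∞) ≤ {n : ℕ | ∃ f ∈ V, f.order = n}.encard := by
  set S := {n : ℕ | ∃ f ∈ V, f.order = n}
  rcases S.finite_or_infinite with hS | hS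
  · have := hS.fintype
    let coeffs : V →ₗ[K] S → K := LinearMap.pi fun n => (coeff n.1).comp V.subtype
    have hinj : Injective coeffs := by
      rw [← LinearMap.ker_eq_bot, eq_bot_iff]
      intro f hf
      by_contra hf0
      have hne : (f : K⟦X⟧) ≠ 0 := by simpa using hf0
      have hmem : (f : K⟦X⟧).order.toNat ∈ S :=
        ⟨f, f.2, (ENat.natCast_toNat (order_eq_top.not.mpr hne)).symm⟩
      exact coeff_order hne (congrFun (LinearMap.mem_ker.mp hf) ⟨_, hmem⟩)
    rw [← hS.cast_ncard_eq, Nat.cast_le, ← Nat.card_coe_set_eq, Nat.card_eq_fintype_card,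
      ← finrank_fintype_fun_eq_card K]
    exact LinearMap.finrank_le_finrank_of_injective hinj
  · simp [hS.encard_eq]

theorem exists_order_injective_of_linearIndependent {k : ℕ} {h : Fin k → K⟦X⟧}
    (hli : LinearIndependent K h) :
    ∃ (g : Fin k → K⟦X⟧) (d : Fin k → ℕ), Injective d ∧
      ∀ j, g j ∈ Submodule.span K (Set.range h) ∧ (g j).order = d j := by
  have := FiniteDimensional.span_of_finite K (Set.finite_range h)
  have hk := finrank_le_encard_orders (Submodule.span K (Set.range h))
  rw [finrank_span_eq_card hli, Fintype.card_fin] at hk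
  obtain ⟨e, -⟩ := Fin.Embedding.exists_embedding_disjoint_range_of_add_le_ENat_card
    (n := k) (s := (∅ : Set {n : ℕ | ∃ f ∈ Submodule.span K (Set.range h), f.order = n}))
    (by rw [Set.ncard_empty, Nat.cast_zero, zero_add]; exact hk)
  choose g hg using fun j => (e j).2
  exact ⟨g, fun j => e j, Subtype.val_injective.comp e.injective, hg⟩

end Order

end PowerSeries

theorem psWronskian_sum_smul {k : ℕ} (A : Matrix (Fin k) (Fin k) ℂ) (h : Fin k → ℂ⟦X⟧) :
    psWronskian (fun j => ∑ l, A j l • h l) = psWronskian h * C A.det := by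
  have hmul : (of fun i j : Fin k => (d⁄dX ℂ)^[i] (∑ l, A j l • h l))
      = (of fun i j : Fin k => (d⁄dX ℂ)^[i] (h j)) * (C.mapMatrix A)ᵀ := by
    ext1 i j
    simp only [of_apply, mul_apply, transpose_apply, RingHom.mapMatrix_apply, map_apply]
    rw [iterate_derivative_sum_smul]
    simp only [smul_eq_C_mul, mul_comm]
  rw [psWronskian, psWronskian, hmul, det_mul, det_transpose, RingHom.map_det]

theorem psWronskian_eq_zero_of_forall_mem_span {k : ℕ} {h g : Fin k → ℂ⟦X⟧}
    (hW : psWronskian h = 0) (hg : ∀ j, g j ∈ Submodule.span ℂ (Set.range h)) :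
    psWronskian g = 0 := by
  choose A hA using fun j => (Submodule.mem_span_range_iff_exists_fun ℂ).mp (hg j)
  have hgA : g = fun j => ∑ l, of A j l • h l := funext fun j => (hA j).symm
  rw [hgA, psWronskian_sum_smul, hW, zero_mul]

theorem psWronskian_eq_zero_of_not_linearIndependent {k : ℕ} {h : Fin k → ℂ⟦X⟧}
    (hdep : ¬ LinearIndependent ℂ h) : psWronskian h = 0 := by
  obtain ⟨c, hc, j, hcj⟩ := Fintype.not_linearIndependent_iff.mp hdep
  refine exists_mulVec_eq_zero_iff.mp ⟨fun l => C (c l), fun h0 => hcj ?_, ?_⟩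
  · simpa using congrFun h0 j
  · ext1 i
    have := congrArg (d⁄dX ℂ)^[i] hc
    rw [iterate_derivative_sum_smul] at this
    simpa [mulVec, dotProduct, smul_eq_C_mul, mul_comm] using this

theorem psWronskian_ne_zero_of_order_injective {k : ℕ} {g : Fin k → ℂ⟦X⟧} {d : Fin k → ℕ}
    (hd : Injective d) (hg : ∀ j, (g j).order = d j) : psWronskian g ≠ 0 := by
  intro hW
  set M := of fun i j : Fin k => X ^ (i : ℕ) * (d⁄dX ℂ)^[i] (g j)
  have hM : M.det = (∏ i : Fin k, X ^ (i : ℕ)) * psWronskian g := det_mul_column _ _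
  have hdvd : ∀ i j, X ^ d j ∣ M i j := fun i j => X_pow_dvd_iff.mpr fun m hm => by
    simp [M, coeff_X_pow_mul_iterate_derivative, (order_eq_nat.mp (hg j)).2 m hm]
  have hcoeff := coeff_sum_det_of_X_pow_dvd M d hdvd
  have hlead : (of fun i j : Fin k => coeff (d j) (M i j)).det
      = (∏ j, coeff (d j) (g j)) * (of fun i j : Fin k => ((d j).descFactorial i : ℂ)).det := by
    rw [← det_mul_row]
    simp only [M, of_apply, coeff_X_pow_mul_iterate_derivative, mul_comm]
  rw [hM, hW, mul_zero, map_zero, hlead] at hcoeff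
  exact mul_ne_zero (prod_ne_zero_iff.mpr fun j _ => (order_eq_nat.mp (hg j)).1)
    (det_descFactorial_ne_zero hd) hcoeff.symm

theorem wronskian_eq_zero_iff_linearDependent_general (k : ℕ)
    (h : Fin k → PowerSeries ℂ) :
    psWronskian h = 0 ↔ ¬ LinearIndependent ℂ h := by
  refine ⟨fun hW hli => ?_, psWronskian_eq_zero_of_not_linearIndependent⟩
  obtain ⟨g, d, hd, hg⟩ := exists_order_injective_of_linearIndependent hli
  exact psWronskian_ne_zero_of_order_injective hd (fun j => (hg j).2)
    (psWronskian_eq_zero_of_forall_mem_span hW fun j => (hg j).1)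

/-- Wronskian criterion for linear dependence: the Wronskian of `h₁, …, h_k` 
vanishes identically if and only if `h₁, …, h_k` are linearly dependent over `ℂ`. -/
theorem wronskian_eq_zero_iff_linearDependent (k : ℕ) (hk : 1 ≤ k)
    (h : Fin k → PowerSeries ℂ) :
    psWronskian h = 0 ↔ ¬ LinearIndependent ℂ h :=
  wronskian_eq_zero_iff_linearDependent_general k h
end

section
/- Unbranched rational null curves exist in every even degree ≥ 4: for every integer p ≥ 1, let F = (1, X^p, X^{p+1}, X^{2p+1}) : Fin 4 → ℂ[X] with minors W_ij = F_i·F_j' − F_j·F_i'. Then X^{p−1} divides every W_ij, and the six polynomials G_ij = W_ij / X^{p−1} satisfy: their gcd is 1, their maximal degree is 2p + 2, they span a ℂ-subspace of ℂ[X] of dimension exactly 5, they satisfy G₀₁·G₂₃ − G₀₂·G₁₃ + G₀₃·G₁₂ = 0 and G₀₁'·G₂₃' − G₀₂'·G₁₃' + G₀₃'·G₁₂' = 0 (so they define a nonlinear null curve of degree 2p+2 in a quadric Q³), and the fifteen pairwise minors G_α·G_β' − G_β·G_α' (over unordered pairs α ≠ β of index pairs) have gcd 1 and maximal degree 4p +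 2 = 2(2p+2) − 2 (the curve is unbranched). -/
open Polynomial

/-- The minor `W_ij = F_i·F_j' − F_j·F_i'` of a curve `F : Fin 4 → ℂ[X]`. -/
noncomputable def minor4 (F : Fin 4 → ℂ[X]) (i j : Fin 4) : ℂ[X] :=
  F i * derivative (F j) - F j * derivative (F i)

/-- The set of ordered index pairs `i < j` in `Fin 4`. -/
def pairs4 : Finset (Fin 4 × Fin 4) := Finset.univ.filter (fun p => p.1 < p.2)

/-!
The curve is monomial, `F_k = X^(a_k)` with `a = (0, p, p+1, 2p+1)`, and the Wronskian of two
monomials is again a monomial: `W(c X^m, d X^n) = cd(n - m) X^(m+n-1)`. Hence each `G_ij` is a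
monomial `(a_j - a_i) X^(a_i + a_j - p)`, and so is each second minor. Everything reduces to
bookkeeping of exponents and coefficients: `G_01 = p` and `W(G_01, G_02) = p(p+1)` are units, the
top degrees come from `G_23 = p X^(2p+2)` and `W(G_13, G_23) = p(p+1) X^(4p+2)`, and the `G_ij`
have the five distinct exponents `0, 1, p+1, 2p+1, 2p+2` (only `G_03` and `G_12` share one).
-/

namespace Polynomial

section CommRing
variable {R : Type*} [CommRing R]

theorem wronskian_eq_mul_derivative_sub (a b : R[X]) :
    wronskian a b = a * derivative b - b * derivative a := by
  rw [wronskian, mul_comm (derivative a)]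

theorem wronskian_C_mul_X_pow (a b : R) (m n : ℕ) :
    wronskian (C a * X ^ m) (C b * X ^ n) = C (a * b * ((n : R) - m)) * X ^ (m + n - 1) := by
  simp only [wronskian, derivative_C_mul_X_pow]
  rcases m with _ | m <;> rcases n with _ | n
  · simp
  · simp only [Nat.cast_zero, mul_zero, map_zero, zero_mul, zero_add, Nat.add_sub_cancel, sub_zero,
      map_mul, map_natCast]
    ring
  · simp only [Nat.cast_zero, mul_zero, map_zero, zero_mul, add_zero, Nat.add_sub_cancel, zero_sub,
      map_mul, map_neg, map_natCast]
    ring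
  · rw [show m + 1 + (n + 1) - 1 = m + n + 1 by omega]
    simp only [Nat.add_sub_cancel, map_mul, map_sub, map_natCast, pow_succ, pow_add]
    ring

theorem wronskian_X_pow (m n : ℕ) :
    wronskian (X ^ m : R[X]) (X ^ n) = C ((n : R) - m) * X ^ (m + n - 1) := by
  simpa using wronskian_C_mul_X_pow (1 : R) 1 m n

end CommRing

section Field
variable {K : Type*} [Field K]

theorem finrank_span_X_pow_image (N : Finset ℕ) :
    Module.finrank K (Submodule.span K ((X ^ · : ℕ → K[X]) '' N)) = N.card := by
  have hli : LinearIndependent K (fun n : N => (X : K[X]) ^ (n : ℕ)) := by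
    simpa [X_pow_eq_monomial, Function.comp_def] using
      (basisMonomials K).linearIndependent.comp _ Subtype.val_injective
  rw [Set.image_eq_range]
  exact (finrank_span_eq_card hli).trans (Fintype.card_coe N)

theorem span_image_C_mul_X_pow {ι : Type*} {s : Set ι} {c : ι → K} (hc : ∀ i ∈ s, c i ≠ 0)
    (e : ι → ℕ) :
    Submodule.span K ((fun i => C (c i) * X ^ e i) '' s) =
      Submodule.span K ((X ^ · : ℕ → K[X]) '' (e '' s)) := by
  rw [Set.image_image]
  apply le_antisymm <;> rw [Submodule.span_le] <;> rintro _ ⟨i, hi, rfl⟩ <;> dsimp only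
  · rw [SetLike.mem_coe, C_mul']
    exact Submodule.smul_mem _ _ (Submodule.subset_span ⟨i, hi, rfl⟩)
  · rw [SetLike.mem_coe, ← inv_smul_smul₀ (hc i hi) (X ^ e i)]
    exact Submodule.smul_mem _ _ (Submodule.subset_span ⟨i, hi, C_mul' _ _⟩)

end Field

end Polynomial

theorem Finset.gcd_eq_one_of_isUnit {α β : Type*} [CommMonoidWithZero α] [NormalizedGCDMonoid α]
    {s : Finset β} {f : β → α} {b : β} (hb : b ∈ s) (hf : IsUnit (f b)) : s.gcd f = 1 := by
  rw [← Finset.normalize_gcd, normalize_eq_one]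
  exact isUnit_of_dvd_unit (Finset.gcd_dvd hb) hf

theorem minor4_eq_wronskian (F : Fin 4 → ℂ[X]) (i j : Fin 4) :
    minor4 F i j = wronskian (F i) (F j) :=
  (wronskian_eq_mul_derivative_sub _ _).symm

theorem pairs4_eq : pairs4 = {(0, 1), (0, 2), (0, 3), (1, 2), (1, 3), (2, 3)} := by decide

section NullCurve

variable (p : ℕ)

def nullCurveExp : Fin 4 → ℕ := ![0, p, p + 1, 2 * p + 1]

local notation "a" => nullCurveExp p

def reducedMinorExp (i j : Fin 4) : ℕ := a i + a j - p

/-- `W_ij / X^(p-1)`. For `i = j` the exponent is truncated, harmlessly: the coefficient is `0`. -/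
noncomputable def reducedMinor (i j : Fin 4) : ℂ[X] :=
  C ((a j : ℂ) - a i) * X ^ reducedMinorExp p i j

theorem nullCurve_eq :
    ![1, X ^ p, X ^ (p + 1), X ^ (2 * p + 1)] = fun k => (X : ℂ[X]) ^ nullCurveExp p k := by
  funext k
  fin_cases k <;> simp [nullCurveExp]

theorem nullCurveExp_strictMono (hp : 1 ≤ p) : StrictMono a := by
  refine Fin.strictMono_iff_lt_succ.2 fun i => ?_
  fin_cases i <;> simp [nullCurveExp] <;> omega

theorem le_nullCurveExp_add {i j : Fin 4} (hij : i ≠ j) : p ≤ a i + a j := by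
  fin_cases i <;> fin_cases j <;> simp_all [nullCurveExp] <;> omega

theorem minor4_X_pow_nullCurveExp (hp : 1 ≤ p) (i j : Fin 4) :
    minor4 (fun k => X ^ a k) i j = X ^ (p - 1) * reducedMinor p i j := by
  rw [minor4_eq_wronskian, wronskian_X_pow, reducedMinor, reducedMinorExp]
  obtain rfl | hij := eq_or_ne i j
  · simp
  · rw [show a i + a j - 1 = (p - 1) + (a i + a j - p) by
      have := le_nullCurveExp_add p hij; omega, pow_add]
    ring

theorem reducedMinor_eq_C_mul_X_pow {i j : Fin 4} {c : ℂ} {n : ℕ} (hc : (a j : ℂ) - a i = c)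
    (hn : a i + a j - p = n) : reducedMinor p i j = C c * X ^ n := by
  rw [reducedMinor, reducedMinorExp, hc, hn]

theorem reducedMinor_zero_one : reducedMinor p 0 1 = C (p : ℂ) * X ^ 0 :=
  reducedMinor_eq_C_mul_X_pow p (by simp [nullCurveExp]) (by simp [nullCurveExp])

theorem reducedMinor_zero_two : reducedMinor p 0 2 = C ((p : ℂ) + 1) * X ^ 1 :=
  reducedMinor_eq_C_mul_X_pow p (by simp [nullCurveExp]) (by simp [nullCurveExp])

theorem reducedMinor_zero_three : reducedMinor p 0 3 = C (2 * (p : ℂ) + 1) * X ^ (p + 1) :=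
  reducedMinor_eq_C_mul_X_pow p (by simp [nullCurveExp]) (by simp [nullCurveExp]; omega)

theorem reducedMinor_one_two : reducedMinor p 1 2 = C 1 * X ^ (p + 1) :=
  reducedMinor_eq_C_mul_X_pow p (by simp [nullCurveExp]) (by simp [nullCurveExp])

theorem reducedMinor_one_three : reducedMinor p 1 3 = C ((p : ℂ) + 1) * X ^ (2 * p + 1) :=
  reducedMinor_eq_C_mul_X_pow p (by simp [nullCurveExp]; ring) (by simp [nullCurveExp])

theorem reducedMinor_two_three : reducedMinor p 2 3 = C (p : ℂ) * X ^ (2 * p + 2) :=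
  reducedMinor_eq_C_mul_X_pow p (by simp [nullCurveExp]; ring) (by simp [nullCurveExp]; omega)

theorem reducedMinor_plucker :
    reducedMinor p 0 1 * reducedMinor p 2 3 - reducedMinor p 0 2 * reducedMinor p 1 3 +
      reducedMinor p 0 3 * reducedMinor p 1 2 = 0 := by
  rw [reducedMinor_zero_one, reducedMinor_zero_two, reducedMinor_zero_three, reducedMinor_one_two,
    reducedMinor_one_three, reducedMinor_two_three]
  simp only [map_add, map_mul, map_natCast, map_one, map_ofNat]
  ring

theorem derivative_reducedMinor_plucker :
    derivative (reducedMinor p 0 1) * derivative (reducedMinor p 2 3) -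
      derivative (reducedMinor p 0 2) * derivative (reducedMinor p 1 3) +
      derivative (reducedMinor p 0 3) * derivative (reducedMinor p 1 2) = 0 := by
  rw [reducedMinor_zero_one, reducedMinor_zero_two, reducedMinor_zero_three, reducedMinor_one_two,
    reducedMinor_one_three, reducedMinor_two_three]
  simp only [derivative_C_mul_X_pow, show 2 * p + 2 - 1 = 2 * p + 1 by omega, Nat.add_sub_cancel]
  simp only [map_mul, map_add, map_natCast, map_one, map_ofNat]
  push_cast
  ring

theorem reducedMinorExp_le_of_ne {α : Fin 4 × Fin 4} (hα : α ∈ pairs4) (hne : α ≠ (2, 3)) :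
    reducedMinorExp p α.1 α.2 ≤ 2 * p + 1 := by
  rw [pairs4_eq] at hα
  fin_cases hα <;> simp_all [reducedMinorExp, nullCurveExp]; omega

theorem reducedMinorExp_le {α : Fin 4 × Fin 4} (hα : α ∈ pairs4) :
    reducedMinorExp p α.1 α.2 ≤ 2 * p + 2 := by
  by_cases hne : α = (2, 3)
  · simp only [hne, reducedMinorExp, nullCurveExp, Matrix.cons_val]; omega
  · linarith [reducedMinorExp_le_of_ne p hα hne]

theorem card_image_reducedMinorExp (hp : 1 ≤ p) :
    (pairs4.image fun α => reducedMinorExp p α.1 α.2).card = 5 := by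
  rw [pairs4_eq]
  simp only [Finset.image_insert, Finset.image_singleton, reducedMinorExp, nullCurveExp,
    Matrix.cons_val, zero_add, tsub_self, add_tsub_cancel_left]
  rw [show 2 * p + 1 - p = p + 1 by omega, show p + 1 + (2 * p + 1) - p = 2 * p + 2 by omega,
    Finset.insert_idem]
  rw [Finset.card_insert_of_notMem, Finset.card_insert_of_notMem, Finset.card_insert_of_notMem,
    Finset.card_insert_of_notMem, Finset.card_singleton] <;> simp <;> omega

theorem gcd_reducedMinor (hp : 1 ≤ p) : pairs4.gcd (fun α => reducedMinor p α.1 α.2) = 1 := by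
  refine Finset.gcd_eq_one_of_isUnit (b := (0, 1)) (by decide) ?_
  show IsUnit (reducedMinor p 0 1)
  rw [reducedMinor_zero_one, pow_zero, mul_one, isUnit_C]
  exact (Nat.cast_ne_zero.2 (by omega)).isUnit

theorem sup_natDegree_reducedMinor (hp : 1 ≤ p) :
    pairs4.sup (fun α => (reducedMinor p α.1 α.2).natDegree) = 2 * p + 2 := by
  refine le_antisymm (Finset.sup_le fun α hα => ?_)
    (Finset.le_sup_of_le (b := (2, 3)) (by decide) ?_)
  · exact (natDegree_C_mul_X_pow_le _ _).trans (reducedMinorExp_le p hα)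
  · show _ ≤ (reducedMinor p 2 3).natDegree
    rw [reducedMinor_two_three, natDegree_C_mul_X_pow _ _ (Nat.cast_ne_zero.2 (by omega))]

theorem setOf_reducedMinor_eq_image :
    {P : ℂ[X] | ∃ i j : Fin 4, i < j ∧ P = reducedMinor p i j} =
      (fun α : Fin 4 × Fin 4 => reducedMinor p α.1 α.2) '' pairs4 := by
  ext P
  simp [pairs4, eq_comm]

theorem finrank_span_reducedMinor (hp : 1 ≤ p) :
    Module.finrank ℂ
      (Submodule.span ℂ {P : ℂ[X] | ∃ i j : Fin 4, i < j ∧ P = reducedMinor p i j}) = 5 := by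
  have hc : ∀ α ∈ (pairs4 : Set (Fin 4 × Fin 4)), (a α.2 : ℂ) - a α.1 ≠ 0 := by
    intro α hα
    have hlt : a α.1 < a α.2 := nullCurveExp_strictMono p hp (by simpa [pairs4] using hα)
    exact sub_ne_zero.2 (by exact_mod_cast hlt.ne')
  rw [setOf_reducedMinor_eq_image]
  unfold reducedMinor
  rw [span_image_C_mul_X_pow hc, ← Finset.coe_image, finrank_span_X_pow_image,
    card_image_reducedMinorExp p hp]

theorem gcd_wronskian_reducedMinor (hp : 1 ≤ p) :
    ((pairs4 ×ˢ pairs4).filter (fun r => r.1 ≠ r.2)).gcd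
      (fun r => wronskian (reducedMinor p r.1.1 r.1.2) (reducedMinor p r.2.1 r.2.2)) = 1 := by
  refine Finset.gcd_eq_one_of_isUnit (b := ((0, 1), (0, 2))) (by decide) ?_
  show IsUnit (wronskian (reducedMinor p 0 1) (reducedMinor p 0 2))
  rw [reducedMinor_zero_one, reducedMinor_zero_two, wronskian_C_mul_X_pow, zero_add,
    Nat.sub_self, pow_zero, mul_one, isUnit_C]
  exact Ne.isUnit (by norm_num [Nat.cast_add_one_ne_zero]; omega)

theorem sup_natDegree_wronskian_reducedMinor (hp : 1 ≤ p) :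
    ((pairs4 ×ˢ pairs4).filter (fun r => r.1 ≠ r.2)).sup
      (fun r => (wronskian (reducedMinor p r.1.1 r.1.2) (reducedMinor p r.2.1 r.2.2)).natDegree) =
      4 * p + 2 := by
  refine le_antisymm (Finset.sup_le ?_)
    (Finset.le_sup_of_le (b := ((1, 3), (2, 3))) (by decide) ?_)
  · rintro ⟨α, β⟩ hr
    obtain ⟨⟨hα, hβ⟩, hne⟩ : (α ∈ pairs4 ∧ β ∈ pairs4) ∧ α ≠ β := by simpa using hr
    dsimp only
    rw [reducedMinor, reducedMinor, wronskian_C_mul_X_pow]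
    refine (natDegree_C_mul_X_pow_le _ _).trans ?_
    have := reducedMinorExp_le p hα
    have := reducedMinorExp_le p hβ
    by_cases h : α = (2, 3)
    · have := reducedMinorExp_le_of_ne p hβ (h ▸ hne.symm)
      omega
    · have := reducedMinorExp_le_of_ne p hα h
      omega
  · show _ ≤ (wronskian (reducedMinor p 1 3) (reducedMinor p 2 3)).natDegree
    rw [reducedMinor_one_three, reducedMinor_two_three, wronskian_C_mul_X_pow,
      natDegree_C_mul_X_pow _ _ (by norm_num [Nat.cast_add_one_ne_zero]; omega)]
    omega

end NullCurve

/-- Unbranched rational null curves exist in every even degree `≥ 4`: for every 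
`p ≥ 1`, dividing the minors of `F = (1, X^p, X^{p+1}, X^{2p+1})` by `X^{p−1}` 
yields a coprime tuple defining an unbranched nonlinear null curve of degree 
`2p + 2` in the Plücker quadric `Q³`. -/
theorem unbranched_null_curves_even_degrees (p : ℕ) (hp : 1 ≤ p)
    (F : Fin 4 → ℂ[X]) (hF : F = ![1, X ^ p, X ^ (p + 1), X ^ (2 * p + 1)]) :
    (∀ i j : Fin 4, X ^ (p - 1) ∣ minor4 F i j) ∧
    ∃ G : Fin 4 → Fin 4 → ℂ[X],
      (∀ i j : Fin 4, minor4 F i j = X ^ (p - 1) * G i j) ∧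
      pairs4.gcd (fun r => G r.1 r.2) = 1 ∧
      pairs4.sup (fun r => (G r.1 r.2).natDegree) = 2 * p + 2 ∧
      Module.finrank ℂ
        ↥(Submodule.span ℂ {P : ℂ[X] | ∃ i j : Fin 4, i < j ∧ P = G i j}) = 5 ∧
      G 0 1 * G 2 3 - G 0 2 * G 1 3 + G 0 3 * G 1 2 = 0 ∧
      derivative (G 0 1) * derivative (G 2 3) -
        derivative (G 0 2) * derivative (G 1 3) +
        derivative (G 0 3) * derivative (G 1 2) = 0 ∧
      ((pairs4 ×ˢ pairs4).filter (fun r => r.1 ≠ r.2)).gcd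
        (fun r => G r.1.1 r.1.2 * derivative (G r.2.1 r.2.2) -
          G r.2.1 r.2.2 * derivative (G r.1.1 r.1.2)) = 1 ∧
      ((pairs4 ×ˢ pairs4).filter (fun r => r.1 ≠ r.2)).sup
        (fun r => (G r.1.1 r.1.2 * derivative (G r.2.1 r.2.2) -
          G r.2.1 r.2.2 * derivative (G r.1.1 r.1.2)).natDegree) = 4 * p + 2 := by
  obtain rfl : F = fun k => X ^ nullCurveExp p k := hF.trans (nullCurve_eq p)
  have hminor := minor4_X_pow_nullCurveExp p hp
  refine ⟨fun i j => ⟨_, hminor i j⟩, reducedMinor p, hminor, gcd_reducedMinor p hp,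
    sup_natDegree_reducedMinor p hp, finrank_span_reducedMinor p hp, reducedMinor_plucker p,
    derivative_reducedMinor_plucker p, ?_, ?_⟩
  · simpa only [wronskian_eq_mul_derivative_sub] using gcd_wronskian_reducedMinor p hp
  · simpa only [wronskian_eq_mul_derivative_sub] using sup_natDegree_wronskian_reducedMinor p hp
end
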